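/- arXiv:1901.00061 — 2 statements merged into one kernel-verified Lean document; each statement's English description precedes it below -/
import Mathlib

section
/- In the unrestricted regular wreath product G = Z Wr Z (the semidirect product of the full direct product ∏_{i∈Z} Z by Z acting by shift), the entire base group ∏_{i∈Z} Z is contained in the commutator subgroup G', and consequently G/G' ≅ Z. -/
/-!
Conjugation by the generator `t` of the top group shifts a base element `g`, so
`⁅g, t⁆ = (x ↦ g x * (g (x - 1))⁻¹)`. Every `f : ℤ → B` has this form: solve
`g x = f x * g (x - 1)` by recursion in both directions from `0`, which is possible precisely
because the base group is unrestricted. Hence the base group, which is the kernel of the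
projection onto `ℤ`, is the commutator subgroup, and the abelianization is `ℤ`.
-/

def permAut {X : Type*} (B : Type*) [Group B] (e : Equiv.Perm X) : MulAut (X → B) :=
  MulEquiv.arrowCongr e (MulEquiv.refl B)

def wreathMul {A X : Type*} [Group A] (ρ : A →* Equiv.Perm X) (B : Type*) [Group B] :
    A →* MulAut (X → B) where
  toFun a := permAut B (ρ a)
  map_one' := by
    ext f x
    simp [permAut]
    rfl
  map_mul' := by
    intro a b
    ext f x
    simp [permAut, MulEquiv.arrowCongr, map_mul]
    rfl

noncomputable def mingen (G : Type*) [Group G] : ℕ :=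
  sInf {k | ∃ S : Finset G, S.card = k ∧ Subgroup.closure (S : Set G) = ⊤}

/-- The translation action of `ℤ` on itself. -/
def transRep : Multiplicative ℤ →* Equiv.Perm ℤ where
  toFun a := Equiv.addLeft a.toAdd
  map_one' := by ext x; simp
  map_mul' := by intro a b; ext x; simp [add_assoc]

open scoped commutatorElement

namespace SemidirectProduct

variable {N : Type*} [Group N]

theorem commutatorElement_inl_inr {G : Type*} [Group G] {φ : G →* MulAut N} (n : N) (g : G) :
    ⁅(inl n : N ⋊[φ] G), (inr g : N ⋊[φ] G)⁆ = inl (n * φ g n⁻¹) := by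
  rw [commutatorElement_def, map_mul, inl_aut, map_inv, map_inv]
  simp only [mul_assoc]

variable {G : Type*} [CommGroup G] {φ : G →* MulAut N}

theorem commutator_eq_ker_rightHom
    (h : ∀ n : N, (inl n : N ⋊[φ] G) ∈ commutator (N ⋊[φ] G)) :
    commutator (N ⋊[φ] G) = rightHom.ker := by
  refine le_antisymm (Abelianization.commutator_subset_ker _) ?_
  rw [← range_inl_eq_ker_rightHom]
  rintro _ ⟨n, rfl⟩
  exact h n

noncomputable def abelianizationEquivOfInlMemCommutator
    (h : ∀ n : N, (inl n : N ⋊[φ] G) ∈ commutator (N ⋊[φ] G)) :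
    Abelianization (N ⋊[φ] G) ≃* G :=
  (QuotientGroup.quotientMulEquivOfEq (commutator_eq_ker_rightHom h)).trans
    (QuotientGroup.quotientKerEquivOfSurjective _ rightHom_surjective)

end SemidirectProduct

theorem Int.exists_forall_eq_mul_sub_one {B : Type*} [Group B] (f : ℤ → B) :
    ∃ g : ℤ → B, ∀ x, g x = f x * g (x - 1) := by
  refine ⟨fun x => x.inductionOn' 0 (motive := fun _ => B) 1
    (fun k _ y => f (k + 1) * y) (fun k _ y => (f k)⁻¹ * y), fun x => ?_⟩
  dsimp only
  rcases le_or_gt x 0 with hx | hx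
  · rw [Int.inductionOn'_sub_one hx, mul_inv_cancel_left]
  · obtain ⟨k, hk, rfl⟩ : ∃ k, 0 ≤ k ∧ x = k + 1 := ⟨x - 1, by omega, by omega⟩
    rw [Int.inductionOn'_add_one hk, add_sub_cancel_right]

theorem wreathMul_transRep_apply (B : Type*) [Group B] (a : Multiplicative ℤ) (f : ℤ → B)
    (x : ℤ) : wreathMul transRep B a f x = f (-a.toAdd + x) :=
  rfl

theorem inl_mem_commutator_wreath_int (B : Type*) [Group B] (f : ℤ → B) :
    (SemidirectProduct.inl f : (ℤ → B) ⋊[wreathMul transRep B] Multiplicative ℤ) ∈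
      commutator ((ℤ → B) ⋊[wreathMul transRep B] Multiplicative ℤ) := by
  obtain ⟨g, hg⟩ := Int.exists_forall_eq_mul_sub_one f
  have hf : SemidirectProduct.inl f = ⁅(.inl g : (ℤ → B) ⋊[wreathMul transRep B] Multiplicative ℤ),
      (.inr (.ofAdd 1) : (ℤ → B) ⋊[wreathMul transRep B] Multiplicative ℤ)⁆ := by
    rw [SemidirectProduct.commutatorElement_inl_inr]
    congr 1
    funext x
    rw [Pi.mul_apply, wreathMul_transRep_apply, Pi.inv_apply, toAdd_ofAdd, neg_add_eq_sub, hg x,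
      mul_inv_cancel_right]
  rw [hf]
  exact Subgroup.commutator_mem_commutator (Subgroup.mem_top _) (Subgroup.mem_top _)

/-- in the unrestricted wreath product `ℤ Wr ℤ`, the whole base group
`∏_{i∈ℤ} ℤ` lies in the commutator subgroup, and consequently the abelianization is
isomorphic to `ℤ`. -/
theorem base_le_commutator_unrestricted_wreath_int :
    (∀ f : ℤ → Multiplicative ℤ,
      (SemidirectProduct.inl f :
          (ℤ → Multiplicative ℤ) ⋊[wreathMul transRep (Multiplicative ℤ)] Multiplicative ℤ)
        ∈ commutator ((ℤ → Multiplicative ℤ)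
            ⋊[wreathMul transRep (Multiplicative ℤ)] Multiplicative ℤ)) ∧
    Nonempty (Abelianization ((ℤ → Multiplicative ℤ)
        ⋊[wreathMul transRep (Multiplicative ℤ)] Multiplicative ℤ) ≃* Multiplicative ℤ) :=
  ⟨inl_mem_commutator_wreath_int _,
    ⟨SemidirectProduct.abelianizationEquivOfInlMemCommutator (inl_mem_commutator_wreath_int _)⟩⟩
end

section
/- Let G = Z ≀_{X_m} (Z ≀_{X_n} Z) be the iterated permutational wreath product where the outer Z acts on a set X_m of size m by cyclic shift and the middle Z acts on X_n of size n by cyclic shift. Then the center of G is isomorphic to mZ × nZ × Z ≅ Z³. -/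
/-- The (unfaithful, for `n ≥ 1`) cyclic-shift action of `ℤ` on `ℤ/n`. -/
def shiftRep (n : ℕ) : Multiplicative ℤ →* Equiv.Perm (ZMod n) where
  toFun a := Equiv.addLeft ((a.toAdd : ℤ) : ZMod n)
  map_one' := by ext x; simp
  map_mul' := by intro a b; ext x; simp [add_assoc]

/-- The inner wreath product `ℤ ≀_{X_n} ℤ`. -/
def innerW (n : ℕ) : Type :=
  (ZMod n → Multiplicative ℤ) ⋊[wreathMul (shiftRep n) (Multiplicative ℤ)] Multiplicative ℤ

instance (n : ℕ) : Group (innerW n) :=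
  inferInstanceAs (Group ((ZMod n → Multiplicative ℤ)
    ⋊[wreathMul (shiftRep n) (Multiplicative ℤ)] Multiplicative ℤ))

/-! An element `(f, a)` of `ℤ ≀_{ℤ/k} B` is central iff `f` is constant with value in the centre
of `B` and `a` lies in the kernel `kℤ` of the shift action: commuting with the shifts forces `f` to
be constant, and if `a ∉ kℤ` then it cannot commute with a function supported at a single point.
Hence `Z(ℤ ≀_{ℤ/k} B) ≅ kℤ × Z(B)`, and two applications of this, with `Z(ℤ) = ℤ`, give
`mℤ × nℤ × ℤ`. -/

abbrev ShiftWreath (k : ℕ) (B : Type*) [Group B] :=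
  (ZMod k → B) ⋊[wreathMul (shiftRep k) B] Multiplicative ℤ

namespace ShiftWreath

open Multiplicative AddSubgroup SemidirectProduct

variable {k : ℕ} {B : Type*} [Group B]

lemma wreathMul_shiftRep_apply (a : Multiplicative ℤ) (f : ZMod k → B) (x : ZMod k) :
    wreathMul (shiftRep k) B a f x = f (x - ((a.toAdd : ℤ) : ZMod k)) := by
  simp [wreathMul, permAut, shiftRep, MulEquiv.arrowCongr, sub_eq_neg_add]

lemma wreathMul_shiftRep_const (a : Multiplicative ℤ) (b : B) :
    wreathMul (shiftRep k) B a (fun _ => b) = fun _ => b :=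
  funext fun x => wreathMul_shiftRep_apply a _ x

lemma wreathMul_shiftRep_eq_one {a : Multiplicative ℤ} (ha : a.toAdd ∈ zmultiples (k : ℤ)) :
    wreathMul (shiftRep k) B a = 1 := by
  ext f x
  rw [wreathMul_shiftRep_apply,
    (ZMod.intCast_zmod_eq_zero_iff_dvd _ _).mpr (Int.mem_zmultiples_iff.mp ha), sub_zero,
    MulAut.one_apply]

instance : Nontrivial (ShiftWreath k B) :=
  inr_injective.nontrivial

lemma left_eq_left_zero_of_mem_center {g : ShiftWreath k B}
    (hg : g ∈ Subgroup.center (ShiftWreath k B)) (x : ZMod k) : g.left x = g.left 0 := by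
  obtain ⟨j, rfl⟩ := ZMod.intCast_surjective x
  have hcomm := congrFun (congrArg left (Subgroup.mem_center_iff.mp hg (inr (ofAdd j)))) j
  simpa [wreathMul_shiftRep_apply] using hcomm.symm

lemma left_zero_mem_center_of_mem_center {g : ShiftWreath k B}
    (hg : g ∈ Subgroup.center (ShiftWreath k B)) : g.left 0 ∈ Subgroup.center B := by
  refine Subgroup.mem_center_iff.mpr fun v => ?_
  have hcomm := congrFun (congrArg left (Subgroup.mem_center_iff.mp hg (inl fun _ => v))) 0
  simpa [wreathMul_shiftRep_const] using hcomm

lemma right_mem_zmultiples_of_mem_center [Nontrivial B] {g : ShiftWreath k B}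
    (hg : g ∈ Subgroup.center (ShiftWreath k B)) : g.right.toAdd ∈ zmultiples (k : ℤ) := by
  rw [Int.mem_zmultiples_iff, ← ZMod.intCast_zmod_eq_zero_iff_dvd]
  by_contra hr
  obtain ⟨v, hv⟩ := exists_ne (1 : B)
  have hcomm := congrFun
    (congrArg left (Subgroup.mem_center_iff.mp hg (inl (Pi.mulSingle 0 v)))) 0
  exact hv (by simpa [wreathMul_shiftRep_apply, hr] using hcomm)

def centerHom (k : ℕ) (B : Type*) [Group B] :
    Multiplicative (zmultiples (k : ℤ)) × Subgroup.center B →* ShiftWreath k B where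
  toFun p := ⟨fun _ => p.2, ofAdd (p.1.toAdd : ℤ)⟩
  map_one' := rfl
  map_mul' p q := by
    refine SemidirectProduct.ext ?_ rfl
    rw [mul_left, wreathMul_shiftRep_const]
    rfl

lemma centerHom_injective : Function.Injective (centerHom k B) := by
  intro p q h
  have hright := ofAdd.injective (congrArg right h)
  have hleft := congrFun (congrArg left h) 0
  exact Prod.ext (toAdd.injective (Subtype.ext hright)) (Subtype.ext hleft)

lemma range_centerHom [Nontrivial B] :
    (centerHom k B).range = Subgroup.center (ShiftWreath k B) := by
  ext g
  constructor
  · rintro ⟨⟨a, z⟩, rfl⟩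
    refine Subgroup.mem_center_iff.mpr fun h => SemidirectProduct.ext ?_ (mul_comm _ _)
    have htrivial : wreathMul (shiftRep k) B (ofAdd (a.toAdd : ℤ)) = 1 :=
      wreathMul_shiftRep_eq_one a.toAdd.2
    funext x
    simpa [centerHom, wreathMul_shiftRep_const, htrivial] using
      Subgroup.mem_center_iff.mp z.2 (h.left x)
  · intro hg
    refine ⟨(ofAdd ⟨g.right.toAdd, right_mem_zmultiples_of_mem_center hg⟩,
      ⟨g.left 0, left_zero_mem_center_of_mem_center hg⟩), SemidirectProduct.ext ?_ rfl⟩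
    funext x
    exact (left_eq_left_zero_of_mem_center hg x).symm

noncomputable def centerEquiv (k : ℕ) (B : Type*) [Group B] [Nontrivial B] :
    Subgroup.center (ShiftWreath k B) ≃*
      Multiplicative (zmultiples (k : ℤ)) × Subgroup.center B :=
  (MulEquiv.subgroupCongr range_centerHom.symm).trans
    (MonoidHom.ofInjective centerHom_injective).symm

end ShiftWreath

instance (n : ℕ) : Nontrivial (innerW n) :=
  inferInstanceAs (Nontrivial (ShiftWreath n (Multiplicative ℤ)))

theorem center_iterated_shift_wreath_int_general (m n : ℕ) :
    Nonempty (Subgroup.center ((ZMod m → innerW n)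
        ⋊[wreathMul (shiftRep m) (innerW n)] Multiplicative ℤ) ≃*
      Multiplicative (↥(AddSubgroup.zmultiples (m : ℤ)) ×
        ↥(AddSubgroup.zmultiples (n : ℤ)) × ℤ)) := by
  have innerCenter : Subgroup.center (innerW n) ≃*
      Multiplicative (AddSubgroup.zmultiples (n : ℤ)) × Multiplicative ℤ :=
    (ShiftWreath.centerEquiv n (Multiplicative ℤ)).trans
      (MulEquiv.prodCongr (MulEquiv.refl _)
        ((MulEquiv.subgroupCongr CommGroup.center_eq_top).trans Subgroup.topEquiv))
  exact ⟨(ShiftWreath.centerEquiv m (innerW n)).trans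
    ((MulEquiv.prodCongr (MulEquiv.refl _)
      (innerCenter.trans (MulEquiv.prodMultiplicative _ _).symm)).trans
      (MulEquiv.prodMultiplicative _ _).symm)⟩

/-- for the iterated wreath product `G = ℤ ≀_{X_m} (ℤ ≀_{X_n} ℤ)` with
cyclic-shift actions on `X_m` and `X_n` of sizes `m`, `n`, the center of `G` is
isomorphic to `mℤ × nℤ × ℤ ≅ ℤ³`. -/
theorem center_iterated_shift_wreath_int (m n : ℕ) (hm : 0 < m) (hn : 0 < n) :
    Nonempty (Subgroup.center ((ZMod m → innerW n)
        ⋊[wreathMul (shiftRep m) (innerW n)] Multiplicative ℤ) ≃*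
      Multiplicative (↥(AddSubgroup.zmultiples (m : ℤ)) ×
        ↥(AddSubgroup.zmultiples (n : ℤ)) × ℤ)) :=
  center_iterated_shift_wreath_int_general m n
end
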